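/- The energy-estimate symbol identity: define q(ξ−η,η) = (ξ·(ξ−η)/(2π|ξ|²))·((ξ−η)×η) for nonzero ξ. Then q₂(ξ−η,η) := (1/2π)(−η)×ξ − q(ξ−η,η) − q(η,ξ−η) = (ξ·η/(π|ξ|²))·((ξ−η)×η). Moreover, for |η| ≤ 2^{−10}|ξ−η| this symbol satisfies |q₂(ξ−η,η)| ≲ |η|², i.e., it is quadratically small in the low frequency, whereas each individual term is only linearly small. -/
import Mathlib


noncomputable section

abbrev E2 := EuclideanSpace ℝ (Fin 2)

/-- The 2D cross product `a × b = a₁b₂ − a₂b₁`. -/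
def cross (a b : E2) : ℝ := a 0 * b 1 - a 1 * b 0

/-- The dot product on ℝ². -/
def dot (a b : E2) : ℝ := a 0 * b 0 + a 1 * b 1

/-- The energy-estimate symbol `q(a,b) = ((a+b)·a/(2π|a+b|²))·(a×b)`, where the output
frequency is `a+b` (so `q(ξ−η,η)` has output frequency `ξ`). -/
def qsym (a b : E2) : ℝ := (dot (a + b) a / (2 * Real.pi * ‖a + b‖ ^ 2)) * cross a b

/-- The symbol `q₂(ξ−η,η) = (1/2π)(−η)×ξ − q(ξ−η,η) − q(η,ξ−η)`. -/
def q2sym (ξ η : E2) : ℝ :=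
  (1 / (2 * Real.pi)) * cross (-η) ξ - qsym (ξ - η) η - qsym η (ξ - η)

lemma normsq (a : E2) : ‖a‖ ^ 2 = a 0 ^ 2 + a 1 ^ 2 := by
  rw [EuclideanSpace.norm_eq, Real.sq_sqrt (by positivity)]
  simp [Fin.sum_univ_two, sq_abs]

lemma abs_le_of_sq (x c : ℝ) (hc : 0 ≤ c) (h : x ^ 2 ≤ c ^ 2) : |x| ≤ c := by
  rw [← Real.sqrt_sq hc, ← Real.sqrt_sq_eq_abs]; exact Real.sqrt_le_sqrt h

lemma dot_abs_le (a b : E2) : |dot a b| ≤ ‖a‖ * ‖b‖ := by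
  apply abs_le_of_sq _ _ (by positivity)
  have ha := normsq a; have hb := normsq b
  rw [mul_pow, ha, hb, dot]; nlinarith [sq_nonneg (a 0 * b 1 - a 1 * b 0)]

lemma cross_abs_le (a b : E2) : |cross a b| ≤ ‖a‖ * ‖b‖ := by
  apply abs_le_of_sq _ _ (by positivity)
  have ha := normsq a; have hb := normsq b
  rw [mul_pow, ha, hb, cross]; nlinarith [sq_nonneg (a 0 * b 0 + a 1 * b 1)]

lemma q2_id (ξ η : E2) (hξ : ξ ≠ 0) :
    q2sym ξ η = (dot ξ η / (Real.pi * ‖ξ‖ ^ 2)) * cross (ξ - η) η := by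
  have hs : ‖ξ‖ ^ 2 ≠ 0 := pow_ne_zero _ (norm_ne_zero_iff.2 hξ)
  have hpi := Real.pi_ne_zero
  unfold q2sym qsym dot cross
  rw [sub_add_cancel, add_sub_cancel]
  simp only [PiLp.sub_apply, PiLp.neg_apply]
  rw [normsq ξ] at hs ⊢
  field_simp
  ring

/-- the energy-estimate symbol identity
`q₂(ξ−η,η) = (ξ·η/(π|ξ|²))·((ξ−η)×η)`, and the resulting quadratic smallness
`|q₂(ξ−η,η)| ≲ |η|²` in the regime `|η| ≤ 2^{−10}|ξ−η|`. -/
theorem stmt15 :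
    (∀ ξ η : E2, ξ ≠ 0 → η ≠ 0 → ξ ≠ η →
        q2sym ξ η = (dot ξ η / (Real.pi * ‖ξ‖ ^ 2)) * cross (ξ - η) η) ∧
      ∃ C > (0 : ℝ), ∀ ξ η : E2, ξ ≠ 0 → η ≠ 0 → ξ ≠ η →
        ‖η‖ ≤ (2 : ℝ) ^ (-10 : ℤ) * ‖ξ - η‖ → |q2sym ξ η| ≤ C * ‖η‖ ^ 2 := by
  constructor
  · intro ξ η hξ _ _; exact q2_id ξ η hξ
  · refine ⟨1, one_pos, fun ξ η hξ hη hne hsmall => ?_⟩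
    rw [q2_id ξ η hξ]
    set s := ‖ξ‖; set n := ‖η‖; set d := ‖ξ - η‖
    have hn : 0 ≤ n := norm_nonneg _
    have hd : 0 < d := by
      simpa [d, sub_ne_zero] using norm_pos_iff.2 (sub_ne_zero.2 hne)
    have hs0 : 0 < s := norm_pos_iff.2 hξ
    have h1 : |dot ξ η| ≤ s * n := dot_abs_le ξ η
    have h2 : |cross (ξ - η) η| ≤ d * n := cross_abs_le (ξ - η) η
    have hsd : d ≤ 2 * s := by
      have : d ≤ s + n := by
        calc d = ‖ξ - η‖ := rfl
        _ ≤ ‖ξ‖ + ‖η‖ := norm_sub_le _ _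
      have hnd : n ≤ d / 2 := by
        rw [show ((2 : ℝ) ^ (-10 : ℤ)) = 1 / 1024 by norm_num] at hsmall
        linarith
      linarith
    have hpos : 0 < Real.pi * s ^ 2 := by positivity
    rw [abs_mul, abs_div, abs_of_pos hpos, div_mul_eq_mul_div, div_le_iff₀ hpos]
    have hprod : |dot ξ η| * |cross (ξ - η) η| ≤ (s * n) * (d * n) :=
      mul_le_mul h1 h2 (abs_nonneg _) (by positivity)
    have h3 : s * n * (d * n) ≤ 2 * (s ^ 2 * n ^ 2) := by
      nlinarith [mul_le_mul_of_nonneg_right hsd (mul_nonneg (mul_nonneg hs0.le hn) hn)]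
    have h4 : 2 * (s ^ 2 * n ^ 2) ≤ 1 * n ^ 2 * (Real.pi * s ^ 2) := by
      nlinarith [Real.pi_gt_three, sq_nonneg (s * n)]
    linarith

end
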